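/- Let (X1, X2) be a random vector on ℝ² whose law has density f with respect to Lebesgue measure, where f is the bivariate normal density with means μ1, μ2 ∈ ℝ, standard deviations σ1, σ2 > 0 and correlation ρ ∈ (−1,1). Then for every x > 0: P{X1 < 0 and X2 < 0 and X1 ≥ x·X2} = ∫₀^x g̃(t) dt, where g̃(t) := −∫_{−∞}^0 s·f(t·s, s) ds; and for every x ≤ 0 this probability is 0. (Note that on the event X1 < 0, X2 < 0 the condition X1/X2 ≤ x is equivalent to X1 ≥ x·X2, so g̃/P(Q3) is the conditional density of X1/X2 on the third quadrant.) -/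

import Mathlib

/-!
Slicing the region `{s1 < 0, s2 < 0, x s2 ≤ s1}` along `s2 = s` and substituting `s1 = t s`
(Jacobian `|s| = -s`), Tonelli turns its mass into `∫_0^x ∫_{s<0} (-s) f(t s, s) ds dt` for any
density `f`. The mass is at most `1`, so the inner integral is finite for almost every `t`; this
is all that is needed to pass to Bochner integrals, whose junk value `0` on non-integrable
functions then only occurs on a null set of `t`. For `x ≤ 0` the range `0 < t ≤ x` is empty.
-/

open Real MeasureTheory ProbabilityTheory Set Filter

/-- The bivariate normal density with means `μ1, μ2`, standard deviations `σ1, σ2`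
and correlation `ρ`. -/
noncomputable def bvnDensity (μ1 μ2 σ1 σ2 ρ : ℝ) (s1 s2 : ℝ) : ℝ :=
  (2 * π * σ1 * σ2 * Real.sqrt (1 - ρ ^ 2))⁻¹ *
    Real.exp (-(1 / 2) * (((s2 - μ2) / σ2) ^ 2 +
      (s1 - μ1 - ρ * (σ1 / σ2) * (s2 - μ2)) ^ 2 / (σ1 ^ 2 * (1 - ρ ^ 2))))

open scoped ENNReal

def thirdQuadrantWedge (x : ℝ) : Set (ℝ × ℝ) := {p | p.1 < 0 ∧ p.2 < 0 ∧ x * p.2 ≤ p.1}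

lemma measurableSet_thirdQuadrantWedge (x : ℝ) : MeasurableSet (thirdQuadrantWedge x) :=
  (measurableSet_lt measurable_fst measurable_const).inter
    ((measurableSet_lt measurable_snd measurable_const).inter
      (measurableSet_le (measurable_const.mul measurable_snd) measurable_fst))

lemma lintegral_indicator_thirdQuadrantWedge_slice (g : ℝ × ℝ → ℝ≥0∞) (x s : ℝ) :
    ∫⁻ y, (thirdQuadrantWedge x).indicator g (y, s) =
      (Iio 0).indicator (fun s => ∫⁻ y in Ico (x * s) 0, g (y, s)) s := by
  by_cases hs : s < 0
  · rw [indicator_of_mem (mem_Iio.2 hs), ← lintegral_indicator measurableSet_Ico]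
    congr 1 with y
    simp [thirdQuadrantWedge, indicator, hs, and_comm]
  · simp [thirdQuadrantWedge, indicator, hs]

lemma image_mul_const_Ioc_of_neg {s : ℝ} (hs : s < 0) (x : ℝ) :
    (fun t => t * s) '' Ioc 0 x = Ico (x * s) 0 := by
  rw [image_eq_preimage_of_inverse (g := fun y => y * s⁻¹) (fun t => by simp [hs.ne])
    (fun t => by simp [hs.ne]), preimage_mul_const_Ioc_of_neg _ _ (inv_lt_zero.2 hs)]
  simp

lemma lintegral_Ico_mul_const_of_neg {s : ℝ} (hs : s < 0) (x : ℝ) (h : ℝ → ℝ≥0∞) :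
    ∫⁻ y in Ico (x * s) 0, h y = ∫⁻ t in Ioc 0 x, ENNReal.ofReal (-s) * h (t * s) := by
  rw [← image_mul_const_Ioc_of_neg hs,
    lintegral_image_eq_lintegral_abs_deriv_mul measurableSet_Ioc
      (fun t _ => (hasDerivAt_mul_const s).hasDerivWithinAt)
      (fun _ _ _ _ h => mul_right_cancel₀ hs.ne h), abs_of_neg hs]

lemma lintegral_thirdQuadrantWedge {g : ℝ × ℝ → ℝ≥0∞} (hg : Measurable g) (x : ℝ) :
    ∫⁻ p in thirdQuadrantWedge x, g p =
      ∫⁻ t in Ioc 0 x, ∫⁻ s in Iio 0, ENNReal.ofReal (-s) * g (t * s, s) := by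
  have hW := measurableSet_thirdQuadrantWedge x
  calc ∫⁻ p in thirdQuadrantWedge x, g p
      = ∫⁻ s, ∫⁻ y, (thirdQuadrantWedge x).indicator g (y, s) := by
        rw [← lintegral_indicator hW, Measure.volume_eq_prod,
          lintegral_prod_symm _ (hg.indicator hW).aemeasurable]
    _ = ∫⁻ s in Iio 0, ∫⁻ y in Ico (x * s) 0, g (y, s) := by
        simp_rw [lintegral_indicator_thirdQuadrantWedge_slice,
          lintegral_indicator measurableSet_Iio]
    _ = ∫⁻ s in Iio 0, ∫⁻ t in Ioc 0 x, ENNReal.ofReal (-s) * g (t * s, s) :=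
        setLIntegral_congr_fun measurableSet_Iio fun s hs =>
          lintegral_Ico_mul_const_of_neg hs x fun y => g (y, s)
    _ = _ := lintegral_lintegral_swap (by fun_prop)

lemma ofReal_intervalIntegral_neg_setIntegral_Iio {f : ℝ → ℝ → ℝ}
    (hf : Measurable fun p : ℝ × ℝ => f p.1 p.2) (hf0 : ∀ s1 s2, 0 ≤ f s1 s2) {x : ℝ}
    (hx : 0 ≤ x) (hfin : ∫⁻ t in Ioc 0 x, ∫⁻ s in Iio 0,
      ENNReal.ofReal (-s) * ENNReal.ofReal (f (t * s) s) ≠ ∞) :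
    ENNReal.ofReal (∫ t in (0 : ℝ)..x, -∫ s in Iio 0, s * f (t * s) s) =
      ∫⁻ t in Ioc 0 x, ∫⁻ s in Iio 0, ENNReal.ofReal (-s) * ENNReal.ofReal (f (t * s) s) := by
  set F : ℝ → ℝ≥0∞ := fun t => ∫⁻ s in Iio 0, ENNReal.ofReal (-s) * ENNReal.ofReal (f (t * s) s)
  have hFm : Measurable F :=
    Measurable.lintegral_prod_right' (ν := volume.restrict (Iio (0 : ℝ)))
      (f := fun p : ℝ × ℝ => ENNReal.ofReal (-p.2) * ENNReal.ofReal (f (p.1 * p.2) p.2))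
      (by fun_prop)
  have hF : ∀ t, -∫ s in Iio 0, s * f (t * s) s = (F t).toReal := by
    intro t
    rw [← integral_neg, integral_eq_lintegral_of_nonneg_ae]
    · congr 1
      refine setLIntegral_congr_fun measurableSet_Iio fun s hs => ?_
      rw [neg_mul_eq_neg_mul, ENNReal.ofReal_mul (neg_nonneg.2 (le_of_lt hs))]
    · filter_upwards [ae_restrict_mem measurableSet_Iio] with s hs
      rw [neg_mul_eq_neg_mul]
      exact mul_nonneg (neg_nonneg.2 (le_of_lt hs)) (hf0 _ _)
    · fun_prop
  simp_rw [hF]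
  rw [intervalIntegral.integral_of_le hx, integral_toReal hFm.aemeasurable (ae_lt_top hFm hfin),
    ENNReal.ofReal_toReal hfin]

lemma bvnDensity_nonneg {σ1 σ2 : ℝ} (hσ1 : 0 ≤ σ1) (hσ2 : 0 ≤ σ2) (μ1 μ2 ρ s1 s2 : ℝ) :
    0 ≤ bvnDensity μ1 μ2 σ1 σ2 ρ s1 s2 := by
  unfold bvnDensity
  positivity

lemma measurable_bvnDensity (μ1 μ2 σ1 σ2 ρ : ℝ) :
    Measurable fun p : ℝ × ℝ => bvnDensity μ1 μ2 σ1 σ2 ρ p.1 p.2 := by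
  unfold bvnDensity
  fun_prop

theorem quotient_cdf_third_quadrant_general
    {Ω : Type*} [MeasurableSpace Ω] (P : Measure Ω) [IsProbabilityMeasure P]
    (X1 X2 : Ω → ℝ) (hX : Measurable fun ω => (X1 ω, X2 ω))
    (μ1 μ2 σ1 σ2 ρ : ℝ) (hσ1 : 0 < σ1) (hσ2 : 0 < σ2)
    (hlaw : Measure.map (fun ω => (X1 ω, X2 ω)) P =
      volume.withDensity fun p => ENNReal.ofReal (bvnDensity μ1 μ2 σ1 σ2 ρ p.1 p.2)) :
    ∀ x : ℝ,
      (0 < x →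
        P {ω | X1 ω < 0 ∧ X2 ω < 0 ∧ x * X2 ω ≤ X1 ω} =
          ENNReal.ofReal (∫ t in (0 : ℝ)..x,
            -∫ s in Set.Iio (0 : ℝ), s * bvnDensity μ1 μ2 σ1 σ2 ρ (t * s) s)) ∧
      (x ≤ 0 → P {ω | X1 ω < 0 ∧ X2 ω < 0 ∧ x * X2 ω ≤ X1 ω} = 0) := by
  intro x
  have hP : P {ω | X1 ω < 0 ∧ X2 ω < 0 ∧ x * X2 ω ≤ X1 ω} =
      ∫⁻ t in Ioc 0 x, ∫⁻ s in Iio 0,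
        ENNReal.ofReal (-s) * ENNReal.ofReal (bvnDensity μ1 μ2 σ1 σ2 ρ (t * s) s) := by
    rw [← lintegral_thirdQuadrantWedge (measurable_bvnDensity μ1 μ2 σ1 σ2 ρ).ennreal_ofReal,
      ← withDensity_apply _ (measurableSet_thirdQuadrantWedge x), ← hlaw,
      Measure.map_apply hX (measurableSet_thirdQuadrantWedge x)]
    rfl
  refine ⟨fun hx => ?_, fun hx => ?_⟩
  · rw [hP, ofReal_intervalIntegral_neg_setIntegral_Iio (measurable_bvnDensity μ1 μ2 σ1 σ2 ρ)
      (bvnDensity_nonneg hσ1.le hσ2.le μ1 μ2 ρ) hx.le (hP ▸ measure_ne_top P _)]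
  · rw [hP, Ioc_eq_empty hx.not_gt, Measure.restrict_empty, lintegral_zero_measure]

theorem quotient_cdf_third_quadrant
    {Ω : Type*} [MeasurableSpace Ω] (P : Measure Ω) [IsProbabilityMeasure P]
    (X1 X2 : Ω → ℝ) (hX : Measurable fun ω => (X1 ω, X2 ω))
    (μ1 μ2 σ1 σ2 ρ : ℝ) (hσ1 : 0 < σ1) (hσ2 : 0 < σ2) (hρ : ρ ∈ Set.Ioo (-1 : ℝ) 1)
    (hlaw : Measure.map (fun ω => (X1 ω, X2 ω)) P =
      volume.withDensity fun p => ENNReal.ofReal (bvnDensity μ1 μ2 σ1 σ2 ρ p.1 p.2)) :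
    ∀ x : ℝ,
      (0 < x →
        P {ω | X1 ω < 0 ∧ X2 ω < 0 ∧ x * X2 ω ≤ X1 ω} =
          ENNReal.ofReal (∫ t in (0 : ℝ)..x,
            -∫ s in Set.Iio (0 : ℝ), s * bvnDensity μ1 μ2 σ1 σ2 ρ (t * s) s)) ∧
      (x ≤ 0 → P {ω | X1 ω < 0 ∧ X2 ω < 0 ∧ x * X2 ω ≤ X1 ω} = 0) :=
  quotient_cdf_third_quadrant_general P X1 X2 hX μ1 μ2 σ1 σ2 ρ hσ1 hσ2 hlaw
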